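/- arXiv:1909.12787 — 2 statements merged into one kernel-verified Lean document; each statement's English description precedes it below -/
import Mathlib

section
/- Let S be a countably based Cu-semigroup satisfying O5, O6 and O7, and let w ∈ S be an idempotent. Then the map x ↦ x ∧ w is a monoid homomorphism S → S preserving the order and suprema of increasing sequences. -/
open scoped ENNReal

namespace CuFormal

variable {S : Type*} [AddCommMonoid S] [PartialOrder S]

/-- The algebra-free way-below relation: `x ≪ y` iff whenever `y ≤ sup yₙ` for an
increasing sequence with supremum, then `x ≤ yₙ` for some `n`. -/
def WayBelow (x y : S) : Prop :=
  ∀ f : ℕ → S, Monotone f → ∀ s : S, IsLUB (Set.range f) s → y ≤ s → ∃ n, x ≤ f n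

/-- Positively ordered monoid with addition monotone. -/
def PosOrdered : Prop :=
  (∀ x : S, (0 : S) ≤ x) ∧ ∀ a b c : S, b ≤ c → a + b ≤ a + c

/-- O1: every increasing sequence has a supremum. -/
def AxO1 : Prop := ∀ f : ℕ → S, Monotone f → ∃ s : S, IsLUB (Set.range f) s

/-- O2: every element is the supremum of a ≪-increasing sequence. -/
def AxO2 : Prop := ∀ x : S, ∃ f : ℕ → S, Monotone f ∧
  (∀ n, WayBelow (f n) (f (n + 1))) ∧ IsLUB (Set.range f) x

/-- O3 -/
def AxO3 : Prop := ∀ x₁ y₁ x₂ y₂ : S,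
  WayBelow x₁ y₁ → WayBelow x₂ y₂ → WayBelow (x₁ + x₂) (y₁ + y₂)

/-- O4 -/
def AxO4 : Prop := ∀ f g : ℕ → S, Monotone f → Monotone g →
  ∀ a b : S, IsLUB (Set.range f) a → IsLUB (Set.range g) b →
    IsLUB (Set.range fun n => f n + g n) (a + b)

/-- A Cu-semigroup: positively ordered monoid satisfying O1–O4. -/
def CuSemigroup : Prop :=
  PosOrdered (S := S) ∧ AxO1 (S := S) ∧ AxO2 (S := S) ∧ AxO3 (S := S) ∧ AxO4 (S := S)

/-- O5 -/
def AxO5 : Prop := ∀ x' x y w' w : S, WayBelow x' x → x ≤ y → WayBelow w' w →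
  x + w ≤ y → ∃ z : S, x' + z ≤ y ∧ y ≤ x + z ∧ WayBelow w' z

/-- O6 -/
def AxO6 : Prop := ∀ x' x y z : S, WayBelow x' x → x ≤ y + z →
  ∃ y' z' : S, x' ≤ y' + z' ∧ y' ≤ x ∧ y' ≤ y ∧ z' ≤ x ∧ z' ≤ z

/-- O7 -/
def AxO7 : Prop := ∀ x₁' x₁ x₂' x₂ w : S,
  WayBelow x₁' x₁ → x₁ ≤ w → WayBelow x₂' x₂ → x₂ ≤ w →
  ∃ x : S, WayBelow x₁' x ∧ WayBelow x₂' x ∧ x ≤ w ∧ x ≤ x₁ + x₂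

/-- An ideal: a downward hereditary subsemigroup closed under suprema of increasing
sequences. -/
def IsIdeal (J : Set S) : Prop :=
  (0 : S) ∈ J ∧ (∀ x y : S, x ∈ J → y ∈ J → x + y ∈ J) ∧
  (∀ x y : S, y ∈ J → x ≤ y → x ∈ J) ∧
  (∀ f : ℕ → S, Monotone f → (∀ n, f n ∈ J) →
    ∀ s : S, IsLUB (Set.range f) s → s ∈ J)

/-- Countably based. -/
def CountablyBased : Prop := ∃ B : Set S, B.Countable ∧
  ∀ x : S, ∃ f : ℕ → S, (∀ n, f n ∈ B) ∧ Monotone f ∧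
    (∀ n, WayBelow (f n) (f (n + 1))) ∧ IsLUB (Set.range f) x

/-- A functional on `S`: preserves `0`, addition, order and suprema of increasing
sequences. -/
def IsFunctional (l : S → ℝ≥0∞) : Prop :=
  l 0 = 0 ∧ (∀ x y : S, l (x + y) = l x + l y) ∧ Monotone l ∧
  (∀ f : ℕ → S, Monotone f → ∀ s : S, IsLUB (Set.range f) s → l s = ⨆ n, l (f n))

/-- `(x̂ ∧ ŷ)(λ) = inf { λ₁(x) + λ₂(y) : λ = λ₁ + λ₂ }`. -/
noncomputable def hatInf (x y : S) (l : S → ℝ≥0∞) : ℝ≥0∞ :=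
  sInf {t : ℝ≥0∞ | ∃ l₁ l₂ : S → ℝ≥0∞, IsFunctional l₁ ∧ IsFunctional l₂ ∧
    (∀ u : S, l u = l₁ u + l₂ u) ∧ t = l₁ x + l₂ y}

/-- Edwards' condition for the functional `l`. -/
def EdwardsFor (l : S → ℝ≥0∞) : Prop := ∀ x y : S,
  hatInf x y l = sSup {t : ℝ≥0∞ | ∃ z : S, z ≤ x ∧ z ≤ y ∧ t = l z}

/-- The ideal generated by a subset. -/
def idealGen (X : Set S) : Set S := ⋂₀ {J : Set S | IsIdeal J ∧ X ⊆ J}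

end CuFormal

/-! Write `m x = x ∧ w`. Superadditivity `m x + m y ≤ m (x + y)` holds because `m x + m y` lies
below `x + y` and below `w + w = w`. For the converse and for suprema, by O2 it suffices to bound
every `a ≪ m (x + y)` (resp. `a ≪ m s`). O6 splits `a ≪ m (x + y) ≤ x + y` into pieces below
`m (x + y) ≤ w` and below `x`, resp. `y`, hence below `m x`, resp. `m y`; and `a ≪ m s ≤ s = sup f`
gives `a ≤ f k` for some `k`, so `a ≤ m (f k)`. -/

theorem IsGLB.le_pair_iff {α : Type*} [Preorder α] {a b c z : α} (h : IsGLB {a, b} c) :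
    z ≤ c ↔ z ≤ a ∧ z ≤ b := by
  rw [le_isGLB_iff h, lowerBounds_insert, lowerBounds_singleton]
  rfl

namespace CuFormal

section PairwiseMeet

variable {α : Type*} [Preorder α] {w : α} {m : α → α}

theorem meet_le_left (hm : ∀ x, IsGLB {x, w} (m x)) (x : α) : m x ≤ x :=
  ((hm x).le_pair_iff.1 le_rfl).1

theorem meet_le_right (hm : ∀ x, IsGLB {x, w} (m x)) (x : α) : m x ≤ w :=
  ((hm x).le_pair_iff.1 le_rfl).2

theorem le_meet (hm : ∀ x, IsGLB {x, w} (m x)) {x z : α} (hx : z ≤ x) (hw : z ≤ w) : z ≤ m x :=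
  (hm x).le_pair_iff.2 ⟨hx, hw⟩

theorem monotone_meet (hm : ∀ x, IsGLB {x, w} (m x)) : Monotone m := fun _ _ hxy =>
  le_meet hm ((meet_le_left hm _).trans hxy) (meet_le_right hm _)

end PairwiseMeet

section WayBelow

variable {S : Type*} [PartialOrder S]

theorem WayBelow.le {x y : S} (h : WayBelow x y) : x ≤ y := by
  obtain ⟨_, hn⟩ := h (fun _ => y) monotone_const y (by simp [isLUB_singleton]) le_rfl
  exact hn

theorem WayBelow.trans_le {x y z : S} (h : WayBelow x y) (hyz : y ≤ z) : WayBelow x z :=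
  fun f hf s hs hzs => h f hf s hs (hyz.trans hzs)

theorem le_of_forall_wayBelow_le (hO2 : AxO2 (S := S)) {a b : S}
    (h : ∀ a', WayBelow a' a → a' ≤ b) : a ≤ b := by
  obtain ⟨g, -, hg, hlub⟩ := hO2 a
  refine hlub.2 ?_
  rintro _ ⟨n, rfl⟩
  exact h _ ((hg n).trans_le (hlub.1 ⟨n + 1, rfl⟩))

theorem isLUB_meet_of_isLUB (hO2 : AxO2 (S := S)) {w : S} {m : S → S}
    (hm : ∀ x, IsGLB {x, w} (m x)) {f : ℕ → S} (hf : Monotone f) {s : S}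
    (hs : IsLUB (Set.range f) s) : IsLUB (Set.range fun n => m (f n)) (m s) := by
  refine ⟨?_, fun u hu => le_of_forall_wayBelow_le hO2 fun a ha => ?_⟩
  · rintro _ ⟨n, rfl⟩
    exact monotone_meet hm (hs.1 ⟨n, rfl⟩)
  · obtain ⟨k, hk⟩ := ha.trans_le (meet_le_left hm s) f hf s hs le_rfl
    exact (le_meet hm hk (ha.le.trans (meet_le_right hm s))).trans (hu ⟨k, rfl⟩)

end WayBelow

variable {S : Type*} [AddCommMonoid S] [PartialOrder S]

theorem PosOrdered.isOrderedAddMonoid (h : PosOrdered (S := S)) : IsOrderedAddMonoid S where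
  add_le_add_left a b hab c := by
    rw [add_comm a, add_comm b]
    exact h.2 c a b hab

section IdempotentMeet

variable [IsOrderedAddMonoid S] {w : S} {m : S → S}

theorem meet_add_meet_le_meet_add (hw : w + w = w) (hm : ∀ x, IsGLB {x, w} (m x)) (x y : S) :
    m x + m y ≤ m (x + y) :=
  le_meet hm (add_le_add (meet_le_left hm x) (meet_le_left hm y))
    (hw ▸ add_le_add (meet_le_right hm x) (meet_le_right hm y))

theorem meet_add_le_meet_add_meet (hO2 : AxO2 (S := S)) (hO6 : AxO6 (S := S))
    (hm : ∀ x, IsGLB {x, w} (m x)) (x y : S) : m (x + y) ≤ m x + m y := by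
  refine le_of_forall_wayBelow_le hO2 fun a ha => ?_
  obtain ⟨y', z', ha_le, hy'm, hy'x, hz'm, hz'y⟩ := hO6 a (m (x + y)) x y ha (meet_le_left hm _)
  exact ha_le.trans <| add_le_add (le_meet hm hy'x (hy'm.trans (meet_le_right hm _)))
    (le_meet hm hz'y (hz'm.trans (meet_le_right hm _)))

end IdempotentMeet

theorem stmt9_general {S : Type*} [AddCommMonoid S] [PartialOrder S]
    (hCu : CuSemigroup (S := S))
    (hO6 : AxO6 (S := S))
    (w : S) (hw : w + w = w)
    (m : S → S) (hm : ∀ x : S, IsGLB {x, w} (m x)) :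
    m 0 = 0 ∧ (∀ x y : S, m (x + y) = m x + m y) ∧ Monotone m ∧
      (∀ f : ℕ → S, Monotone f → ∀ s : S, IsLUB (Set.range f) s →
        IsLUB (Set.range fun n => m (f n)) (m s)) := by
  obtain ⟨hS, -, hO2, -, -⟩ := hCu
  have := PosOrdered.isOrderedAddMonoid hS
  refine ⟨?_, fun x y => ?_, monotone_meet hm, fun f hf s hs => isLUB_meet_of_isLUB hO2 hm hf hs⟩
  · exact le_antisymm (meet_le_left hm 0) (le_meet hm le_rfl (hS.1 w))
  · exact (meet_add_le_meet_add_meet hO2 hO6 hm x y).antisymm (meet_add_meet_le_meet_add hw hm x y)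

/-- the map `x ↦ x ∧ w` (for an idempotent `w`) is an additive,
order-preserving, supremum-preserving monoid homomorphism. -/
theorem stmt9 {S : Type*} [AddCommMonoid S] [PartialOrder S]
    (hCu : CuSemigroup (S := S)) (hcb : CountablyBased (S := S))
    (hO5 : AxO5 (S := S)) (hO6 : AxO6 (S := S)) (hO7 : AxO7 (S := S))
    (w : S) (hw : w + w = w)
    (m : S → S) (hm : ∀ x : S, IsGLB {x, w} (m x)) :
    m 0 = 0 ∧ (∀ x y : S, m (x + y) = m x + m y) ∧ Monotone m ∧
      (∀ f : ℕ → S, Monotone f → ∀ s : S, IsLUB (Set.range f) s →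
        IsLUB (Set.range fun n => m (f n)) (m s)) :=
  stmt9_general hCu hO6 w hw m hm

end CuFormal
end

section
/- Let S be a Cu-semigroup satisfying O6, and let x, y ∈ S. Then the intersection ⟨x⟩ ∩ ⟨y⟩ of the ideals generated by x and by y equals the ideal generated by the set { z ∈ S : z ≤ x and z ≤ y }. -/
open scoped ENNReal

namespace CuFormal

variable {S : Type*} [AddCommMonoid S] [PartialOrder S]

/-! The inclusion `⊇` is immediate. For `⊆`, elements of `⟨x⟩` are exactly those whose
way-below approximants are dominated by multiples of `x`, so it suffices to show that every
common lower bound of `N • x` and `M • y` lies in `J := ⟨{z | z ≤ x ∧ z ≤ y}⟩`. The property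
"every common lower bound of `u` and `v` lies in `J`" holds for `(x, y)` and is additive in `u`:
given `c ≤ u₁ + u₂` and `a ≪ c`, O6 splits `a` below a sum of common lower bounds of `c, u₁`
and of `c, u₂`, and `J` is determined by such approximants `a`. By symmetry it passes from
`(x, y)` to `(N • x, M • y)`. -/

lemma PosOrdered.add_le_add (hP : PosOrdered (S := S)) {a b c d : S}
    (hac : a ≤ c) (hbd : b ≤ d) : a + b ≤ c + d :=
  calc a + b ≤ a + d := hP.2 a b d hbd
    _ = d + a := add_comm _ _
    _ ≤ d + c := hP.2 d a c hac
    _ = c + d := add_comm _ _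

section WayBelow

omit [AddCommMonoid S]

variable {a b c : S}

lemma WayBelow.le_s12 (h : WayBelow a b) : a ≤ b := by
  obtain ⟨_, hn⟩ := h (fun _ => b) monotone_const b
    ⟨by rintro _ ⟨_, rfl⟩; exact le_rfl, fun _ hc => hc ⟨0, rfl⟩⟩ le_rfl
  exact hn

lemma WayBelow.trans_le_s12 (h : WayBelow a b) (hbc : b ≤ c) : WayBelow a c :=
  fun f hf s hs hcs => h f hf s hs (hbc.trans hcs)

lemma wayBelow_of_le_of_wayBelow (hab : a ≤ b) (h : WayBelow b c) : WayBelow a c :=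
  fun f hf s hs hcs => (h f hf s hs hcs).imp fun _ => hab.trans

lemma wayBelow_of_isLUB {f : ℕ → S} (hwb : ∀ n, WayBelow (f n) (f (n + 1)))
    (hb : IsLUB (Set.range f) b) (n : ℕ) : WayBelow (f n) b :=
  (hwb n).trans_le_s12 (hb.1 ⟨n + 1, rfl⟩)

lemma exists_wayBelow_wayBelow (hO2 : AxO2 (S := S)) (h : WayBelow a b) :
    ∃ c, WayBelow a c ∧ WayBelow c b := by
  obtain ⟨f, hf, hwb, hb⟩ := hO2 b
  obtain ⟨n, hn⟩ := h f hf b hb le_rfl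
  exact ⟨f (n + 1), wayBelow_of_le_of_wayBelow hn (hwb n), wayBelow_of_isLUB hwb hb (n + 1)⟩

end WayBelow

namespace IsIdeal

variable {J : Set S}

lemma zero_mem (hJ : IsIdeal J) : (0 : S) ∈ J := hJ.1

lemma add_mem (hJ : IsIdeal J) {a b : S} (ha : a ∈ J) (hb : b ∈ J) : a + b ∈ J :=
  hJ.2.1 a b ha hb

lemma mem_of_le (hJ : IsIdeal J) {a b : S} (hb : b ∈ J) (hab : a ≤ b) : a ∈ J :=
  hJ.2.2.1 a b hb hab

lemma mem_of_forall_wayBelow (hO2 : AxO2 (S := S)) (hJ : IsIdeal J) {w : S}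
    (h : ∀ a, WayBelow a w → a ∈ J) : w ∈ J := by
  obtain ⟨f, hf, hwb, hw⟩ := hO2 w
  exact hJ.2.2.2 f hf (fun n => h (f n) (wayBelow_of_isLUB hwb hw n)) w hw

end IsIdeal

lemma isIdeal_idealGen (X : Set S) : IsIdeal (idealGen X) := by
  refine ⟨?_, ?_, ?_, ?_⟩
  · exact Set.mem_sInter.2 fun J hJ => hJ.1.zero_mem
  · exact fun u v hu hv => Set.mem_sInter.2 fun J hJ => hJ.1.add_mem (hu J hJ) (hv J hJ)
  · exact fun u v hv huv => Set.mem_sInter.2 fun J hJ => hJ.1.mem_of_le (hv J hJ) huv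
  · exact fun f hf hfJ s hs =>
      Set.mem_sInter.2 fun J hJ => hJ.1.2.2.2 f hf (fun n => hfJ n J hJ) s hs

lemma subset_idealGen (X : Set S) : X ⊆ idealGen X :=
  fun _ hz => Set.mem_sInter.2 fun _ hJ => hJ.2 hz

lemma idealGen_subset {X J : Set S} (hJ : IsIdeal J) (hXJ : X ⊆ J) : idealGen X ⊆ J :=
  fun _ hw => Set.mem_sInter.1 hw J ⟨hJ, hXJ⟩

lemma idealGen_subset_idealGen_singleton {X : Set S} {x : S} (h : ∀ z ∈ X, z ≤ x) :
    idealGen X ⊆ idealGen {x} :=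
  idealGen_subset (isIdeal_idealGen _) fun z hz =>
    (isIdeal_idealGen _).mem_of_le (subset_idealGen _ rfl) (h z hz)

/-- The paper's description of `⟨x⟩`. -/
def boundedByMultiples (x : S) : Set S := {w | ∀ a, WayBelow a w → ∃ n : ℕ, a ≤ n • x}

lemma isIdeal_boundedByMultiples (hP : PosOrdered (S := S)) (hO2 : AxO2 (S := S))
    (hO4 : AxO4 (S := S)) (x : S) : IsIdeal (boundedByMultiples x) := by
  refine ⟨fun a ha => ⟨0, by simpa using ha.le_s12⟩, ?_, ?_, ?_⟩
  · intro u v hu hv a ha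
    obtain ⟨f, hf, hfwb, hu'⟩ := hO2 u
    obtain ⟨g, hg, hgwb, hv'⟩ := hO2 v
    obtain ⟨n, hn⟩ := ha (fun n => f n + g n) (fun i j hij => hP.add_le_add (hf hij) (hg hij))
      (u + v) (hO4 f g hf hg u v hu' hv') le_rfl
    obtain ⟨n₁, hn₁⟩ := hu (f n) (wayBelow_of_isLUB hfwb hu' n)
    obtain ⟨n₂, hn₂⟩ := hv (g n) (wayBelow_of_isLUB hgwb hv' n)
    exact ⟨n₁ + n₂, hn.trans (by rw [add_nsmul]; exact hP.add_le_add hn₁ hn₂)⟩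
  · exact fun u v hv huv a ha => hv a (ha.trans_le_s12 huv)
  · intro f hf hfJ s hs a ha
    obtain ⟨c, hac, hcs⟩ := exists_wayBelow_wayBelow hO2 ha
    obtain ⟨n, hn⟩ := hcs f hf s hs le_rfl
    exact hfJ n a (hac.trans_le_s12 hn)

lemma idealGen_singleton_subset_boundedByMultiples (hP : PosOrdered (S := S))
    (hO2 : AxO2 (S := S)) (hO4 : AxO4 (S := S)) (x : S) :
    idealGen {x} ⊆ boundedByMultiples x :=
  idealGen_subset (isIdeal_boundedByMultiples hP hO2 hO4 x) <|
    Set.singleton_subset_iff.2 fun a ha => ⟨1, by simpa using ha.le_s12⟩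

def CommonLowerBoundsIn (J : Set S) (u v : S) : Prop := ∀ c, c ≤ u → c ≤ v → c ∈ J

namespace CommonLowerBoundsIn

variable {J : Set S} {u u₁ u₂ v : S}

omit [AddCommMonoid S] in
lemma symm (h : CommonLowerBoundsIn J u v) : CommonLowerBoundsIn J v u :=
  fun c hcv hcu => h c hcu hcv

lemma add_left (hO2 : AxO2 (S := S)) (hO6 : AxO6 (S := S)) (hJ : IsIdeal J)
    (h₁ : CommonLowerBoundsIn J u₁ v) (h₂ : CommonLowerBoundsIn J u₂ v) :
    CommonLowerBoundsIn J (u₁ + u₂) v := by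
  intro c hcu hcv
  refine hJ.mem_of_forall_wayBelow hO2 fun a ha => ?_
  obtain ⟨y', z', ha_le, hy'c, hy'u, hz'c, hz'u⟩ := hO6 a c u₁ u₂ ha hcu
  exact hJ.mem_of_le (hJ.add_mem (h₁ y' hy'u (hy'c.trans hcv)) (h₂ z' hz'u (hz'c.trans hcv)))
    ha_le

lemma nsmul_left (hO2 : AxO2 (S := S)) (hO6 : AxO6 (S := S)) (hJ : IsIdeal J)
    (h : CommonLowerBoundsIn J u v) (n : ℕ) : CommonLowerBoundsIn J (n • u) v := by
  induction n with
  | zero => exact fun c hc _ => hJ.mem_of_le hJ.zero_mem (by simpa using hc)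
  | succ n ih => rw [succ_nsmul]; exact ih.add_left hO2 hO6 hJ h

lemma nsmul_nsmul (hO2 : AxO2 (S := S)) (hO6 : AxO6 (S := S)) (hJ : IsIdeal J)
    (h : CommonLowerBoundsIn J u v) (m n : ℕ) : CommonLowerBoundsIn J (m • u) (n • v) :=
  (h.symm.nsmul_left hO2 hO6 hJ n).symm.nsmul_left hO2 hO6 hJ m

end CommonLowerBoundsIn

/-- in a Cu-semigroup satisfying O6,
`⟨x⟩ ∩ ⟨y⟩` is the ideal generated by `{z : z ≤ x, z ≤ y}`. -/
theorem stmt12 {S : Type*} [AddCommMonoid S] [PartialOrder S]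
    (hCu : CuSemigroup (S := S)) (hO6 : AxO6 (S := S)) (x y : S) :
    idealGen {x} ∩ idealGen {y} = idealGen {z : S | z ≤ x ∧ z ≤ y} := by
  obtain ⟨hP, -, hO2, -, hO4⟩ := hCu
  set J := idealGen {z : S | z ≤ x ∧ z ≤ y}
  have hJ : IsIdeal J := isIdeal_idealGen _
  refine subset_antisymm ?_ (Set.subset_inter
    (idealGen_subset_idealGen_singleton fun _ hz => hz.1)
    (idealGen_subset_idealGen_singleton fun _ hz => hz.2))
  rintro w ⟨hwx, hwy⟩
  refine hJ.mem_of_forall_wayBelow hO2 fun a ha => ?_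
  obtain ⟨m, ham⟩ := idealGen_singleton_subset_boundedByMultiples hP hO2 hO4 x hwx a ha
  obtain ⟨n, han⟩ := idealGen_singleton_subset_boundedByMultiples hP hO2 hO4 y hwy a ha
  have hxy : CommonLowerBoundsIn J x y := fun c hcx hcy => subset_idealGen _ ⟨hcx, hcy⟩
  exact hxy.nsmul_nsmul hO2 hO6 hJ m n a ham han

end CuFormal
end
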